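/- arXiv:1006.2533 — 4 statements merged into one kernel-verified Lean document; each statement's English description precedes it below -/
import Mathlib

section
/- Let f(t) = A(t)e^{2πiφ(t)} where A is C¹ with ‖A'‖_∞ ≤ ε‖φ'‖_∞ and φ is C² with ‖φ''‖_∞ ≤ ε‖φ'‖_∞, A, φ' bounded. Let g be a Schwartz function and define V_g f(t,η) = ∫ f(x) g(x-t) e^{-2πiη(x-t)} dx and Q(t,η) = A(t)e^{2πiφ(t)} ĝ(η - φ'(t)). Then for all (t,η), |V_g f(t,η) - Q(t,η)| ≤ ε‖φ'‖_∞ (I₁ + π‖A‖_∞ I₂), where I_n = ∫ |u|^n |g(u)| du. -/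
/-!
Substituting `x = t + u`, both `V_g f(t, η)` and `Q(t, η)` are integrals of `g(u) e^{-2πiηu}`
against, respectively, `A(t+u) e^{2πiφ(t+u)}` and its linearisation `A(t) e^{2πi(φ(t) + φ'(t)u)}`.
By the mean value theorem the amplitudes differ by at most `ε‖φ'‖∞ |u|`, by Taylor's theorem the
phases by at most `ε‖φ'‖∞ u²/2`, and `|e^{2πiα} - e^{2πiβ}| ≤ 2π|α - β|`; integrating against
`|g|` gives the moments `I₁` and `I₂`.
-/

open Complex MeasureTheory Set Real

lemma abs_sub_le_of_abs_deriv_le {f : ℝ → ℝ} (hf : Differentiable ℝ f) {K : ℝ}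
    (hK : ∀ x, |deriv f x| ≤ K) (a b : ℝ) : |f b - f a| ≤ K * |b - a| := by
  simpa using convex_univ.norm_image_sub_le_of_norm_deriv_le (fun x _ => hf x)
    (fun x _ => by simpa using hK x) (mem_univ a) (mem_univ b)

lemma abs_sub_sub_deriv_mul_le {f : ℝ → ℝ} (hf : ContDiff ℝ 2 f) {K : ℝ}
    (hK : ∀ x, |deriv (deriv f) x| ≤ K) (a b : ℝ) :
    |f b - f a - deriv f a * (b - a)| ≤ K / 2 * (b - a) ^ 2 := by
  rcases eq_or_ne a b with rfl | hab
  · simp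
  obtain ⟨c, -, hc⟩ := taylor_mean_remainder_lagrange_iteratedDeriv (n := 1) hab hf.contDiffOn
  have htaylor : taylorWithinEval f 1 (uIcc a b) a b = f a + deriv f a * (b - a) := by
    have hd : derivWithin f (uIcc a b) a = deriv f a :=
      ((hf.differentiable two_ne_zero) a).derivWithin
        ((uniqueDiffOn_uIcc hab) a left_mem_uIcc)
    simp only [taylorWithinEval_succ, taylor_within_zero_eval, Nat.cast_zero, zero_add,
      Nat.factorial_zero, Nat.cast_one, mul_one, inv_one, pow_one, one_mul,
      iteratedDerivWithin_one, hd, smul_eq_mul]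
    ring
  rw [htaylor, iteratedDeriv_succ, iteratedDeriv_one] at hc
  rw [show f b - f a - deriv f a * (b - a) = f b - (f a + deriv f a * (b - a)) by ring, hc,
    abs_div, abs_mul, abs_of_nonneg (sq_nonneg (b - a))]
  norm_num
  nlinarith [hK c, sq_nonneg (b - a)]

lemma norm_cexp_two_pi_I_mul (x : ℝ) : ‖cexp (2 * π * I * x)‖ = 1 := by
  rw [norm_exp]; simp

lemma norm_cexp_two_pi_I_mul_sub_le (x y : ℝ) :
    ‖cexp (2 * π * I * x) - cexp (2 * π * I * y)‖ ≤ 2 * π * |x - y| := by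
  have h : cexp (2 * π * I * x) - cexp (2 * π * I * y)
      = cexp (2 * π * I * y) * (cexp (I * ↑(2 * π * (x - y))) - 1) := by
    rw [mul_sub, mul_one, ← Complex.exp_add]; congr 2; push_cast; ring
  rw [h, norm_mul, norm_cexp_two_pi_I_mul, one_mul]
  refine norm_exp_I_mul_ofReal_sub_one_le.trans_eq ?_
  rw [Real.norm_eq_abs, abs_mul, abs_of_pos Real.two_pi_pos]

lemma norm_ofReal_mul_cexp_sub_le (a b x y : ℝ) :
    ‖(a : ℂ) * cexp (2 * π * I * x) - b * cexp (2 * π * I * y)‖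
      ≤ |a - b| + 2 * π * |b| * |x - y| := by
  have h : (a : ℂ) * cexp (2 * π * I * x) - b * cexp (2 * π * I * y)
      = ↑(a - b) * cexp (2 * π * I * x) + b * (cexp (2 * π * I * x) - cexp (2 * π * I * y)) := by
    push_cast; ring
  rw [h]
  refine (norm_add_le _ _).trans (add_le_add ?_ ?_)
  · rw [norm_mul, norm_cexp_two_pi_I_mul, mul_one, norm_real, Real.norm_eq_abs]
  · rw [norm_mul, norm_real, Real.norm_eq_abs]
    exact (mul_le_mul_of_nonneg_left (norm_cexp_two_pi_I_mul_sub_le x y) (abs_nonneg b)).trans_eq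
      (by ring)

lemma norm_integral_mul_sub_integral_mul_le (g : SchwartzMap ℝ ℂ) {h₁ h₂ : ℝ → ℂ}
    (hh₁ : AEStronglyMeasurable h₁) (hh₂ : AEStronglyMeasurable h₂) {C₁ C₂ a b : ℝ}
    (hC₁ : ∀ u, ‖h₁ u‖ ≤ C₁) (hC₂ : ∀ u, ‖h₂ u‖ ≤ C₂)
    (hh : ∀ u, ‖h₁ u - h₂ u‖ ≤ a * |u| + b * |u| ^ 2) :
    ‖(∫ u, h₁ u * g u) - ∫ u, h₂ u * g u‖
      ≤ a * (∫ u, |u| * ‖g u‖) + b * ∫ u, |u| ^ 2 * ‖g u‖ := by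
  have hI₁ : Integrable fun u : ℝ => |u| * ‖g u‖ := by
    simpa using g.integrable_pow_mul volume 1
  have hI₂ : Integrable fun u : ℝ => |u| ^ 2 * ‖g u‖ := by
    simpa using g.integrable_pow_mul volume 2
  have hg₁ : Integrable fun u => h₁ u * g u := g.integrable.bdd_mul hh₁ (ae_of_all _ hC₁)
  have hg₂ : Integrable fun u => h₂ u * g u := g.integrable.bdd_mul hh₂ (ae_of_all _ hC₂)
  rw [← integral_sub hg₁ hg₂, ← integral_const_mul, ← integral_const_mul,
    ← integral_add (hI₁.const_mul a) (hI₂.const_mul b)]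
  refine norm_integral_le_of_norm_le ((hI₁.const_mul a).add (hI₂.const_mul b))
    (ae_of_all _ fun u => ?_)
  rw [← sub_mul, norm_mul]
  calc ‖h₁ u - h₂ u‖ * ‖g u‖ ≤ (a * |u| + b * |u| ^ 2) * ‖g u‖ := by gcongr; exact hh u
    _ = a * (|u| * ‖g u‖) + b * (|u| ^ 2 * ‖g u‖) := by ring

lemma integral_mul_shift_mul_cexp_eq (F g : ℝ → ℂ) (t η : ℝ) :
    (∫ x : ℝ, F x * g (x - t) * cexp (-(2 * π * I * η * (x - t))))
      = ∫ u : ℝ, (F (u + t) * cexp (2 * π * I * ↑(-(η * u)))) * g u := by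
  rw [← integral_add_right_eq_self _ t]
  congr 1 with u
  push_cast
  ring_nf

lemma ofReal_mul_cexp_mul_fourier_eq (g : ℝ → ℂ) (a θ ν η : ℝ) :
    (a : ℂ) * cexp (2 * π * I * θ) * FourierTransform.fourier g (η - ν)
      = ∫ u : ℝ, ((a : ℂ) * cexp (2 * π * I * ↑(θ + ν * u)) * cexp (2 * π * I * ↑(-(η * u))))
          * g u := by
  rw [Real.fourier_real_eq_integral_exp_smul, ← integral_const_mul]
  congr 1 with u
  have hexp : cexp (2 * π * I * θ) * cexp (↑(-2 * π * u * (η - ν)) * I)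
      = cexp (2 * π * I * ↑(θ + ν * u)) * cexp (2 * π * I * ↑(-(η * u))) := by
    rw [← Complex.exp_add, ← Complex.exp_add]
    congr 1
    push_cast
    ring
  rw [smul_eq_mul]
  linear_combination (a * g u) * hexp

lemma norm_ofReal_mul_cexp_sub_linearization_le {A φ : ℝ → ℝ} (hA : ContDiff ℝ 1 A)
    (hφ : ContDiff ℝ 2 φ) {MA K : ℝ} (hMA : ∀ x, |A x| ≤ MA) (hA' : ∀ x, |deriv A x| ≤ K)
    (hφ'' : ∀ x, |deriv (deriv φ) x| ≤ K) (t u : ℝ) :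
    ‖(A (u + t) : ℂ) * cexp (2 * π * I * ↑(φ (u + t)))
        - A t * cexp (2 * π * I * ↑(φ t + deriv φ t * u))‖
      ≤ K * |u| + π * MA * K * |u| ^ 2 := by
  refine (norm_ofReal_mul_cexp_sub_le _ _ _ _).trans ?_
  have hamp := abs_sub_le_of_abs_deriv_le (hA.differentiable one_ne_zero) hA' t (u + t)
  have hphase := abs_sub_sub_deriv_mul_le hφ hφ'' t (u + t)
  simp only [add_sub_cancel_right] at hamp hphase
  have hphase' : 2 * π * |A t| * |φ (u + t) - (φ t + deriv φ t * u)|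
      ≤ 2 * π * MA * (K / 2 * u ^ 2) := by
    have hMA0 : 0 ≤ MA := (abs_nonneg _).trans (hMA t)
    rw [← sub_sub]
    gcongr
    exact hMA t
  rw [sq_abs]
  linarith

theorem stft_approx_Q_general
    (A φ : ℝ → ℝ) (hA : ContDiff ℝ 1 A) (hφ : ContDiff ℝ 2 φ)
    (ε MA Mφ' : ℝ)
    (hMA : ∀ x, |A x| ≤ MA)
    (hA' : ∀ x, |deriv A x| ≤ ε * Mφ')
    (hφ'' : ∀ x, |deriv (deriv φ) x| ≤ ε * Mφ')
    (g : SchwartzMap ℝ ℂ)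
    (I₁ I₂ : ℝ)
    (hI₁ : I₁ = ∫ u : ℝ, |u| * ‖g u‖)
    (hI₂ : I₂ = ∫ u : ℝ, |u| ^ 2 * ‖g u‖) :
    ∀ t η : ℝ,
      ‖((∫ x : ℝ, ((A x : ℂ) * Complex.exp (2 * Real.pi * Complex.I * (φ x : ℂ))) *
              g (x - t) * Complex.exp (-(2 * Real.pi * Complex.I * (η : ℂ) * ((x : ℂ) - t))))
          - (A t : ℂ) * Complex.exp (2 * Real.pi * Complex.I * (φ t : ℂ)) *
              FourierTransform.fourier (fun u => g u) (η - deriv φ t))‖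
        ≤ ε * Mφ' * (I₁ + Real.pi * MA * I₂) := by
  intro t η
  have hAc := hA.continuous
  have hφc := hφ.continuous
  rw [integral_mul_shift_mul_cexp_eq, ofReal_mul_cexp_mul_fourier_eq]
  refine (norm_integral_mul_sub_integral_mul_le g (by fun_prop) (by fun_prop)
    (C₁ := MA) (C₂ := MA) (a := ε * Mφ') (b := π * MA * (ε * Mφ')) (fun u => ?_) (fun u => ?_) (fun u => ?_)).trans_eq
    (by rw [hI₁, hI₂]; ring)
  · rw [norm_mul, norm_mul, norm_cexp_two_pi_I_mul, norm_cexp_two_pi_I_mul, norm_real]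
    simpa using hMA (u + t)
  · rw [norm_mul, norm_mul, norm_cexp_two_pi_I_mul, norm_cexp_two_pi_I_mul, norm_real]
    simpa using hMA t
  · rw [← sub_mul, norm_mul, norm_cexp_two_pi_I_mul, mul_one]
    exact norm_ofReal_mul_cexp_sub_linearization_le hA hφ hMA hA' hφ'' t u

/-- For an IMF `f(t) = A(t)e^{2πiφ(t)}` with `‖A'‖∞ ≤ ε‖φ'‖∞`, `‖φ''‖∞ ≤ ε‖φ'‖∞`
and a Schwartz window `g`, the modified STFT `V_g f(t,η)` is close to
`Q(t,η) = A(t)e^{2πiφ(t)} ĝ(η-φ'(t))`: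
`|V_g f(t,η) - Q(t,η)| ≤ ε‖φ'‖∞ (I₁ + π‖A‖∞ I₂)`. -/
theorem stft_approx_Q
    (A φ : ℝ → ℝ) (hA : ContDiff ℝ 1 A) (hφ : ContDiff ℝ 2 φ)
    (hApos : ∀ x, 0 < A x) (hφ'pos : ∀ x, 0 < deriv φ x)
    (ε MA Mφ' : ℝ) (hε : 0 < ε)
    (hMA : ∀ x, |A x| ≤ MA) (hMφ' : ∀ x, |deriv φ x| ≤ Mφ')
    (hA' : ∀ x, |deriv A x| ≤ ε * Mφ')
    (hφ'' : ∀ x, |deriv (deriv φ) x| ≤ ε * Mφ')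
    (g : SchwartzMap ℝ ℂ)
    (I₁ I₂ : ℝ)
    (hI₁ : I₁ = ∫ u : ℝ, |u| * ‖g u‖)
    (hI₂ : I₂ = ∫ u : ℝ, |u| ^ 2 * ‖g u‖) :
    ∀ t η : ℝ,
      ‖((∫ x : ℝ, ((A x : ℂ) * Complex.exp (2 * Real.pi * Complex.I * (φ x : ℂ))) *
              g (x - t) * Complex.exp (-(2 * Real.pi * Complex.I * (η : ℂ) * ((x : ℂ) - t))))
          - (A t : ℂ) * Complex.exp (2 * Real.pi * Complex.I * (φ t : ℂ)) *
              FourierTransform.fourier (fun u => g u) (η - deriv φ t))‖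
        ≤ ε * Mφ' * (I₁ + Real.pi * MA * I₂) :=
  stft_approx_Q_general A φ hA hφ ε MA Mφ' hMA hA' hφ'' g I₁ I₂ hI₁ hI₂
end

section
/- Under the same hypotheses as the previous lemma, the t-derivative of the STFT satisfies |(1/(2πi)) ∂_t V_g f(t,η) - φ'(t) Q(t,η)| ≤ ε‖φ'‖_∞ ( (1/(2π)) I₀ + (‖A‖_∞ + ‖φ'‖_∞) I₁ + π‖A‖_∞‖φ'‖_∞ I₂ ), for all (t,η), where I₀ = ∫|g(u)|du. -/
/-!
Substituting `x = u + s` writes the STFT as `∫ f (u + s) g(u) e^{-2πiηu} du`, which is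
differentiated under the integral sign since `f'` is bounded and `g` is integrable. The term
`φ'(t) Q(t, η)` is the integral of `φ'(t) A(t) e^{2πi(φ(t) + φ'(t) u)} g(u) e^{-2πiηu}`, so the
difference is at most the integral against `|g|` of the pointwise error between
`(2πi)⁻¹ f'(u + t)` and `φ'(t) A(t) e^{2πi(φ(t) + φ'(t) u)}`. That error splits into four terms,
bounded by `|A'|`, by the Lipschitz bounds on `φ'` and `A`, and by the second-order Taylor bound
`|φ(u + t) - φ(t) - φ'(t) u| ≤ ε‖φ'‖ u² / 2`; they produce the moments `I₀`, `I₁`, `I₂`.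
-/

open Complex MeasureTheory
open scoped Real

section MeanValue

variable {E : Type*} [NormedAddCommGroup E] [NormedSpace ℝ E]

theorem norm_sub_le_of_norm_deriv_le {f : ℝ → E} {C : ℝ} (hf : Differentiable ℝ f)
    (hC : ∀ x, ‖deriv f x‖ ≤ C) (x y : ℝ) : ‖f x - f y‖ ≤ C * |x - y| := by
  simpa [Real.norm_eq_abs] using Convex.norm_image_sub_le_of_norm_deriv_le
    (fun z _ => hf z) (fun z _ => hC z) convex_univ (Set.mem_univ y) (Set.mem_univ x)

theorem norm_sub_sub_smul_le_of_lipschitz_deriv_of_le {f f' : ℝ → E} {C : ℝ}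
    (hf : ∀ x, HasDerivAt f (f' x) x) (hf' : ∀ x y, ‖f' x - f' y‖ ≤ C * |x - y|)
    {t x : ℝ} (htx : t ≤ x) : ‖f x - f t - (x - t) • f' t‖ ≤ C / 2 * (x - t) ^ 2 := by
  have hB : ∀ s, HasDerivAt (fun s => C / 2 * (s - t) ^ 2) (C * (s - t)) s := fun s =>
    ((((hasDerivAt_id' s).sub_const t).fun_pow 2).const_mul (C / 2)).congr_deriv (by ring)
  have hR : ∀ s, HasDerivAt (fun s => f s - f t - (s - t) • f' t) (f' s - f' t) s := fun s => by
    simpa using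
      ((hf s).sub_const (f t)).fun_sub (((hasDerivAt_id s).sub_const t).smul_const (f' t))
  refine image_norm_le_of_norm_deriv_right_le_deriv_boundary
    (fun s _ => (hR s).continuousAt.continuousWithinAt) (fun s _ => (hR s).hasDerivWithinAt)
    (by simp) hB (fun s hs => ?_) ⟨htx, le_rfl⟩
  simpa [abs_of_nonneg (sub_nonneg.2 hs.1)] using hf' s t

theorem norm_sub_sub_smul_le_of_lipschitz_deriv {f f' : ℝ → E} {C : ℝ}
    (hf : ∀ x, HasDerivAt f (f' x) x) (hf' : ∀ x y, ‖f' x - f' y‖ ≤ C * |x - y|) (t x : ℝ) :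
    ‖f x - f t - (x - t) • f' t‖ ≤ C / 2 * (x - t) ^ 2 := by
  rcases le_total t x with htx | hxt
  · exact norm_sub_sub_smul_le_of_lipschitz_deriv_of_le hf hf' htx
  · have hneg : ∀ s, HasDerivAt (fun s => f (-s)) (-f' (-s)) s := fun s => by
      simpa [Function.comp_def] using (hf (-s)).scomp s (hasDerivAt_neg s)
    have := norm_sub_sub_smul_le_of_lipschitz_deriv_of_le (C := C) hneg
      (fun a b => by
        have h := hf' (-a) (-b)
        rw [neg_sub_neg, abs_sub_comm] at h
        rwa [neg_sub_neg, norm_sub_rev])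
      (neg_le_neg hxt)
    rwa [neg_neg, neg_neg, neg_sub_neg, smul_neg, ← neg_smul, neg_sub, ← neg_sub x t,
      neg_sq] at this

end MeanValue

theorem norm_exp_two_pi_I_mul (θ : ℝ) : ‖exp (2 * π * I * θ)‖ = 1 := by
  rw [show (2 * π * I * θ : ℂ) = ((2 * π * θ : ℝ) : ℂ) * I by push_cast; ring]
  exact norm_exp_ofReal_mul_I _

theorem norm_exp_two_pi_I_mul_sub_le (a b : ℝ) :
    ‖exp (2 * π * I * a) - exp (2 * π * I * b)‖ ≤ 2 * π * |a - b| := by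
  have h : exp (2 * π * I * a) - exp (2 * π * I * b)
      = exp (2 * π * I * b) * (exp (I * ((2 * π * (a - b) : ℝ) : ℂ)) - 1) := by
    rw [mul_sub, mul_one, ← exp_add]
    congr 2
    push_cast
    ring
  rw [h, norm_mul, norm_exp_two_pi_I_mul, one_mul]
  refine Real.norm_exp_I_mul_ofReal_sub_one_le.trans_eq ?_
  rw [Real.norm_eq_abs, abs_mul, abs_of_pos Real.two_pi_pos]

theorem norm_inv_two_pi_I_mul_sub_le (a' p a p₀ a₀ θ θ₀ : ℝ) :
    ‖1 / (2 * π * I) * ((a' + 2 * π * I * p * a) * exp (2 * π * I * θ))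
        - p₀ * a₀ * exp (2 * π * I * θ₀)‖
      ≤ |a'| / (2 * π) + |p - p₀| * |a| + |p₀| * |a - a₀|
        + 2 * π * (|p₀| * |a₀| * |θ - θ₀|) := by
  have hsplit : 1 / (2 * π * I) * ((a' + 2 * π * I * p * a) * exp (2 * π * I * θ))
        - p₀ * a₀ * exp (2 * π * I * θ₀)
      = a' / (2 * π * I) * exp (2 * π * I * θ)
        + ((p - p₀ : ℝ) : ℂ) * a * exp (2 * π * I * θ)
        + p₀ * ((a - a₀ : ℝ) : ℂ) * exp (2 * π * I * θ)
        + p₀ * a₀ * (exp (2 * π * I * θ) - exp (2 * π * I * θ₀)) := by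
    push_cast
    field_simp [two_pi_I_ne_zero]
    ring
  rw [hsplit]
  refine norm_add₄_le.trans ?_
  simp only [norm_mul, norm_div, norm_exp_two_pi_I_mul, norm_real, Real.norm_eq_abs, norm_I,
    Complex.norm_two, abs_of_pos Real.pi_pos, mul_one]
  have := mul_le_mul_of_nonneg_left (norm_exp_two_pi_I_mul_sub_le θ θ₀)
    (by positivity : 0 ≤ |p₀| * |a₀|)
  linarith

theorem integral_mul_comp_sub_mul_exp (F g : ℝ → ℂ) (η s : ℝ) :
    ∫ x, F x * g (x - s) * exp (-(2 * π * I * η * (x - s)))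
      = ∫ u, F (u + s) * (g u * exp (2 * π * I * (-(η * u) : ℝ))) := by
  rw [← integral_add_right_eq_self _ s]
  congr 1 with u
  rw [add_sub_cancel_right, mul_assoc]
  congr 3
  push_cast
  ring

theorem mul_exp_two_pi_I_mul_fourier_sub (g : ℝ → ℂ) (a : ℂ) (c p η : ℝ) :
    a * exp (2 * π * I * c) * FourierTransform.fourier g (η - p)
      = ∫ u, a * exp (2 * π * I * (c + p * u : ℝ))
          * (g u * exp (2 * π * I * (-(η * u) : ℝ))) := by
  rw [Real.fourier_real_eq_integral_exp_smul, ← integral_const_mul]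
  congr 1 with u
  have hexp : exp (2 * π * I * c) * exp (((-2 * π * u * (η - p) : ℝ) : ℂ) * I)
      = exp (2 * π * I * (c + p * u : ℝ)) * exp (2 * π * I * (-(η * u) : ℝ)) := by
    rw [← exp_add, ← exp_add]
    congr 1
    push_cast
    ring
  rw [smul_eq_mul]
  linear_combination a * g u * hexp

theorem hasDerivAt_integral_comp_add_mul {F F' k : ℝ → ℂ} {M M' : ℝ} (hk : Integrable k)
    (hF : ∀ x, HasDerivAt F (F' x) x) (hFM : ∀ x, ‖F x‖ ≤ M) (hF'M : ∀ x, ‖F' x‖ ≤ M')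
    (t : ℝ) :
    Integrable (fun u => F' (u + t) * k u) ∧
      HasDerivAt (fun s => ∫ u, F (u + s) * k u) (∫ u, F' (u + t) * k u) t := by
  have hFc : Continuous F := continuous_iff_continuousAt.2 fun x => (hF x).continuousAt
  have hF'm : Measurable F' := by
    have hderiv : deriv F = F' := funext fun x => (hF x).deriv
    exact hderiv ▸ measurable_deriv F
  refine hasDerivAt_integral_of_dominated_loc_of_deriv_le (x₀ := t)
    (F := fun s u => F (u + s) * k u) (F' := fun s u => F' (u + s) * k u)
    (bound := fun u => M' * ‖k u‖) Filter.univ_mem ?_ ?_ ?_ ?_ (hk.norm.const_mul M') ?_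
  · exact Filter.Eventually.of_forall fun s =>
      (hFc.comp (continuous_add_const s)).aestronglyMeasurable.mul hk.aestronglyMeasurable
  · exact hk.bdd_mul (hFc.comp (continuous_add_const t)).aestronglyMeasurable
      (ae_of_all _ fun u => hFM (u + t))
  · exact (hF'm.comp (measurable_add_const t)).aestronglyMeasurable.mul hk.aestronglyMeasurable
  · exact ae_of_all _ fun u s _ => by
      rw [norm_mul]
      exact mul_le_mul_of_nonneg_right (hF'M (u + s)) (norm_nonneg _)
  · exact ae_of_all _ fun u s _ =>
      ((hF (u + s)).comp_const_add u).mul_const (k u) |>.congr_deriv rfl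

section Moments

variable {E F : Type*} [NormedAddCommGroup E] [NormedSpace ℝ E] [NormedAddCommGroup F]
  [NormedSpace ℝ F]

theorem SchwartzMap.norm_integral_le_of_norm_le_moments (g : SchwartzMap ℝ E) {h : ℝ → F}
    {a b c : ℝ} (hh : ∀ u, ‖h u‖ ≤ (a + b * |u| + c * |u| ^ 2) * ‖g u‖) :
    ‖∫ u, h u‖ ≤ a * (∫ u, ‖g u‖) + b * (∫ u, |u| * ‖g u‖) + c * ∫ u, |u| ^ 2 * ‖g u‖ := by
  have hint : ∀ n : ℕ, Integrable (fun u : ℝ => |u| ^ n * ‖g u‖) := fun n => by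
    simpa [Real.norm_eq_abs] using g.integrable_pow_mul volume n
  have h0 := hint 0
  have h1 := hint 1
  simp only [pow_zero, one_mul, pow_one] at h0 h1
  calc ‖∫ u, h u‖ ≤ ∫ u, (a + b * |u| + c * |u| ^ 2) * ‖g u‖ := by
        refine norm_integral_le_of_norm_le ?_ (ae_of_all _ hh)
        simp only [add_mul, mul_assoc]
        exact ((h0.const_mul a).fun_add (h1.const_mul b)).fun_add ((hint 2).const_mul c)
    _ = _ := by
        simp only [add_mul, mul_assoc]
        rw [integral_add ((h0.const_mul a).fun_add (h1.const_mul b)) ((hint 2).const_mul c),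
          integral_add (h0.const_mul a) (h1.const_mul b), integral_const_mul, integral_const_mul,
          integral_const_mul]

end Moments

noncomputable def chirp (A φ : ℝ → ℝ) (x : ℝ) : ℂ := A x * exp (2 * π * I * φ x)

noncomputable def chirpDeriv (A φ : ℝ → ℝ) (x : ℝ) : ℂ :=
  (deriv A x + 2 * π * I * deriv φ x * A x) * exp (2 * π * I * φ x)

theorem hasDerivAt_chirp {A φ : ℝ → ℝ} (hA : Differentiable ℝ A) (hφ : Differentiable ℝ φ)
    (x : ℝ) : HasDerivAt (chirp A φ) (chirpDeriv A φ x) x := by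
  have hexp := ((hφ x).hasDerivAt.ofReal_comp.const_mul (2 * π * I : ℂ)).cexp
  exact ((hA x).hasDerivAt.ofReal_comp.fun_mul hexp).congr_deriv
    (by simp only [chirpDeriv]; ring)

section ChirpBounds

variable {A φ : ℝ → ℝ} {C MA Mφ' : ℝ}

theorem norm_chirp_le (hMA : ∀ x, |A x| ≤ MA) (x : ℝ) : ‖chirp A φ x‖ ≤ MA := by
  simpa [chirp, norm_exp_two_pi_I_mul] using hMA x

theorem norm_chirpDeriv_le (hMA : ∀ x, |A x| ≤ MA) (hMφ' : ∀ x, |deriv φ x| ≤ Mφ')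
    (hA' : ∀ x, |deriv A x| ≤ C) (x : ℝ) : ‖chirpDeriv A φ x‖ ≤ C + 2 * π * Mφ' * MA := by
  rw [chirpDeriv, norm_mul, norm_exp_two_pi_I_mul, mul_one]
  refine (norm_add_le _ _).trans ?_
  simp only [norm_mul, norm_real, Real.norm_eq_abs, norm_I, Complex.norm_two,
    abs_of_pos Real.pi_pos, mul_one]
  have hMφ'0 : 0 ≤ Mφ' := (abs_nonneg _).trans (hMφ' x)
  gcongr
  exacts [hA' x, hMφ' x, hMA x]

theorem norm_inv_two_pi_I_mul_chirpDeriv_sub_le (hA : ContDiff ℝ 1 A) (hφ : ContDiff ℝ 2 φ)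
    (hMA : ∀ x, |A x| ≤ MA) (hMφ' : ∀ x, |deriv φ x| ≤ Mφ')
    (hA' : ∀ x, |deriv A x| ≤ C) (hφ'' : ∀ x, |deriv (deriv φ) x| ≤ C) (t u : ℝ) :
    ‖1 / (2 * π * I) * chirpDeriv A φ (u + t)
        - deriv φ t * A t * exp (2 * π * I * (φ t + deriv φ t * u : ℝ))‖
      ≤ C / (2 * π) + C * (MA + Mφ') * |u| + C * (π * MA * Mφ') * |u| ^ 2 := by
  have hC : 0 ≤ C := (abs_nonneg _).trans (hA' 0)
  have hMA0 : 0 ≤ MA := (abs_nonneg _).trans (hMA 0)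
  have hMφ'0 : 0 ≤ Mφ' := (abs_nonneg _).trans (hMφ' 0)
  have hA'ut := hA' (u + t)
  have hAut := hMA (u + t)
  have hAt := hMA t
  have hφ't := hMφ' t
  have hφ'Lip := norm_sub_le_of_norm_deriv_le hφ.differentiable_deriv_two hφ''
  have hφ'diff : |deriv φ (u + t) - deriv φ t| ≤ C * |u| := by
    simpa using hφ'Lip (u + t) t
  have hAdiff : |A (u + t) - A t| ≤ C * |u| := by
    simpa using norm_sub_le_of_norm_deriv_le (hA.differentiable one_ne_zero) hA' (u + t) t
  have hφtaylor : |φ (u + t) - (φ t + deriv φ t * u)| ≤ C / 2 * u ^ 2 := by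
    simpa [sub_sub, mul_comm u] using norm_sub_sub_smul_le_of_lipschitz_deriv
      (fun x => (hφ.differentiable two_ne_zero x).hasDerivAt) hφ'Lip t (u + t)
  refine (norm_inv_two_pi_I_mul_sub_le _ _ _ _ _ _ _).trans ?_
  calc _ ≤ C / (2 * π) + C * |u| * MA + Mφ' * (C * |u|)
        + 2 * π * (Mφ' * MA * (C / 2 * u ^ 2)) := by
        gcongr
    _ = _ := by rw [sq_abs]; ring

end ChirpBounds

theorem stft_deriv_approx_Q_general
    (A φ : ℝ → ℝ) (hA : ContDiff ℝ 1 A) (hφ : ContDiff ℝ 2 φ)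
    (ε MA Mφ' : ℝ)
    (hMA : ∀ x, |A x| ≤ MA) (hMφ' : ∀ x, |deriv φ x| ≤ Mφ')
    (hA' : ∀ x, |deriv A x| ≤ ε * Mφ')
    (hφ'' : ∀ x, |deriv (deriv φ) x| ≤ ε * Mφ')
    (g : SchwartzMap ℝ ℂ)
    (I₀ I₁ I₂ : ℝ)
    (hI₀ : I₀ = ∫ u : ℝ, ‖g u‖)
    (hI₁ : I₁ = ∫ u : ℝ, |u| * ‖g u‖)
    (hI₂ : I₂ = ∫ u : ℝ, |u| ^ 2 * ‖g u‖) :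
    ∀ t η : ℝ,
      norm
        ((1 / (2 * Real.pi * Complex.I)) *
            deriv (fun s : ℝ =>
              ∫ x : ℝ, ((A x : ℂ) * Complex.exp (2 * Real.pi * Complex.I * (φ x : ℂ))) *
                g (x - s) *
                Complex.exp (-(2 * Real.pi * Complex.I * (η : ℂ) * ((x : ℂ) - s)))) t
          - Complex.ofReal (deriv φ t) *
              ((A t : ℂ) * Complex.exp (2 * Real.pi * Complex.I * (φ t : ℂ)) *
                FourierTransform.fourier (fun u => g u : ℝ → ℂ) (η - deriv φ t)))
        ≤ ε * Mφ' * ((1 / (2 * Real.pi)) * I₀ + (MA + Mφ') * I₁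
            + Real.pi * MA * Mφ' * I₂) := by
  intro t η
  have hk : Integrable (fun u : ℝ => g u * exp (2 * π * I * (-(η * u) : ℝ))) :=
    g.integrable.mul_bdd (by fun_prop) (ae_of_all _ fun u => (norm_exp_two_pi_I_mul _).le)
  obtain ⟨hint, hderiv⟩ := hasDerivAt_integral_comp_add_mul hk
    (hasDerivAt_chirp (hA.differentiable one_ne_zero) (hφ.differentiable two_ne_zero))
    (norm_chirp_le hMA) (norm_chirpDeriv_le hMA hMφ' hA') t
  have hQint : Integrable (fun u : ℝ => ofReal (deriv φ t) * A t * exp (2 * π * I *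
      (φ t + deriv φ t * u : ℝ)) * (g u * exp (2 * π * I * (-(η * u) : ℝ)))) :=
    hk.bdd_mul (c := |deriv φ t| * |A t|) (by fun_prop) (ae_of_all _ fun u => by
      rw [norm_mul, norm_mul, norm_exp_two_pi_I_mul, mul_one, norm_real, norm_real,
        Real.norm_eq_abs, Real.norm_eq_abs])
  erw [funext (integral_mul_comp_sub_mul_exp (chirp A φ) _ η)]
  rw [hderiv.deriv, ← mul_assoc, ← mul_assoc, mul_exp_two_pi_I_mul_fourier_sub,
    ← integral_const_mul, ← integral_sub (hint.const_mul _) hQint]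
  refine (g.norm_integral_le_of_norm_le_moments (a := ε * Mφ' / (2 * π))
    (b := ε * Mφ' * (MA + Mφ')) (c := ε * Mφ' * (π * MA * Mφ')) fun u => ?_).trans_eq
    (by rw [hI₀, hI₁, hI₂]; ring)
  rw [← mul_assoc (1 / _), ← sub_mul, norm_mul, norm_mul, norm_exp_two_pi_I_mul, mul_one]
  exact mul_le_mul_of_nonneg_right
    (norm_inv_two_pi_I_mul_chirpDeriv_sub_le hA hφ hMA hMφ' hA' hφ'' t u) (norm_nonneg _)

/-- Under the same hypotheses as Lemma 3.6's first bound, the `t`-derivative of the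
modified STFT satisfies
`|(1/(2πi)) ∂ₜ V_g f(t,η) - φ'(t) Q(t,η)|
  ≤ ε‖φ'‖∞ ((1/(2π)) I₀ + (‖A‖∞ + ‖φ'‖∞) I₁ + π‖A‖∞‖φ'‖∞ I₂)`. -/
theorem stft_deriv_approx_Q
    (A φ : ℝ → ℝ) (hA : ContDiff ℝ 1 A) (hφ : ContDiff ℝ 2 φ)
    (hApos : ∀ x, 0 < A x) (hφ'pos : ∀ x, 0 < deriv φ x)
    (ε MA Mφ' : ℝ) (hε : 0 < ε)
    (hMA : ∀ x, |A x| ≤ MA) (hMφ' : ∀ x, |deriv φ x| ≤ Mφ')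
    (hA' : ∀ x, |deriv A x| ≤ ε * Mφ')
    (hφ'' : ∀ x, |deriv (deriv φ) x| ≤ ε * Mφ')
    (g : SchwartzMap ℝ ℂ)
    (I₀ I₁ I₂ : ℝ)
    (hI₀ : I₀ = ∫ u : ℝ, ‖g u‖)
    (hI₁ : I₁ = ∫ u : ℝ, |u| * ‖g u‖)
    (hI₂ : I₂ = ∫ u : ℝ, |u| ^ 2 * ‖g u‖) :
    ∀ t η : ℝ,
      norm
        ((1 / (2 * Real.pi * Complex.I)) *
            deriv (fun s : ℝ =>
              ∫ x : ℝ, ((A x : ℂ) * Complex.exp (2 * Real.pi * Complex.I * (φ x : ℂ))) *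
                g (x - s) *
                Complex.exp (-(2 * Real.pi * Complex.I * (η : ℂ) * ((x : ℂ) - s)))) t
          - Complex.ofReal (deriv φ t) *
              ((A t : ℂ) * Complex.exp (2 * Real.pi * Complex.I * (φ t : ℂ)) *
                FourierTransform.fourier (fun u => g u : ℝ → ℂ) (η - deriv φ t)))
        ≤ ε * Mφ' * ((1 / (2 * Real.pi)) * I₀ + (MA + Mφ') * I₁
            + Real.pi * MA * Mφ' * I₂) :=
  stft_deriv_approx_Q_general A φ hA hφ ε MA Mφ' hMA hMφ' hA' hφ'' g I₀ I₁ I₂ hI₀ hI₁ hI₂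
end

section
/- Let f(t) = Σ_{k=1}^K A_k(t)e^{2πiφ_k(t)} be a sum of IMFs whose instantaneous frequencies are separated by d > 0 (inf_t φ'_k(t) - sup_t φ'_{k-1}(t) > d for all k), and let g be Schwartz with supp(ĝ) ⊂ [-d/2, d/2]. If (t,η) satisfies |η - φ'_k(t)| ≥ d/2 for every k, then |V_g f(t,η)| ≤ Σ_{k=1}^K ε‖φ'_k‖_∞ (I₁ + π‖A_k‖_∞ I₂). -/
/-!
Freeze the amplitude and linearise the phase of each component at `t`: the STFT of the chirp
`A_k(t) e^{2πi(φ_k(t) + φ_k'(t)(x - t))}` is `A_k(t) e^{2πiφ_k(t)} ĝ(η - φ_k'(t))`, which vanishes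
because `ĝ` is continuous with support in `[-d/2, d/2]`. The remainder is bounded pointwise by
`|A_k(x) - A_k(t)| ≤ ε‖φ_k'‖∞ |x - t|` plus `2π‖A_k‖∞` times the Taylor remainder
`|φ_k(x) - φ_k(t) - φ_k'(t)(x - t)| ≤ ε‖φ_k'‖∞ (x - t)² / 2`; integrating against `|g(x - t)|`
produces the moments `I₁` and `I₂`.
-/

open Complex MeasureTheory Set Function
open scoped Real FourierTransform

lemma norm_sub_le_mul_abs_of_norm_deriv_le {E : Type*} [NormedAddCommGroup E] [NormedSpace ℝ E]
    {f : ℝ → E} (hf : Differentiable ℝ f) {M : ℝ} (hM : ∀ x, ‖deriv f x‖ ≤ M) (x y : ℝ) :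
    ‖f y - f x‖ ≤ M * |y - x| :=
  Convex.norm_image_sub_le_of_norm_deriv_le (fun z _ => hf z) (fun z _ => hM z) convex_univ
    (mem_univ x) (mem_univ y)

lemma abs_le_of_abs_deriv_le_mul_abs {ψ : ℝ → ℝ} (hψ : Differentiable ℝ ψ) {t M : ℝ}
    (ht : ψ t = 0) (hM : ∀ s, |deriv ψ s| ≤ M * |s - t|) (x : ℝ) :
    |ψ x| ≤ M / 2 * (x - t) ^ 2 := by
  have hsq : ∀ c, HasDerivAt (fun s => (s - t) ^ 2) (2 * (c - t)) c := fun c => by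
    simpa using ((hasDerivAt_id c).sub_const t).fun_pow 2
  -- Cauchy's mean value theorem for `ψ` and `(· - t) ^ 2` on the segment between `t` and `x`
  have cauchy : ∀ a b, a < b → ∃ c ∈ Ioo a b,
      ((b - t) ^ 2 - (a - t) ^ 2) * deriv ψ c = (ψ b - ψ a) * (2 * (c - t)) := fun a b hab =>
    exists_ratio_hasDerivAt_eq_ratio_slope ψ (deriv ψ) hab hψ.continuous.continuousOn
      (fun c _ => (hψ c).hasDerivAt) _ _ (by fun_prop) (fun c _ => hsq c)
  obtain ⟨c, hct, hc⟩ : ∃ c, c ≠ t ∧ (x - t) ^ 2 * deriv ψ c = ψ x * (2 * (c - t)) := by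
    rcases lt_trichotomy x t with hxt | rfl | hxt
    · obtain ⟨c, hc, h⟩ := cauchy x t hxt
      exact ⟨c, hc.2.ne, by rw [ht] at h; linear_combination -h⟩
    · exact ⟨x + 1, by simp, by simp [ht]⟩
    · obtain ⟨c, hc, h⟩ := cauchy t x hxt
      exact ⟨c, hc.1.ne', by rw [ht] at h; linear_combination h⟩
  have hpos : 0 < |c - t| := abs_pos.2 (sub_ne_zero.2 hct)
  have habs := congrArg abs hc
  simp only [abs_mul, abs_sq, abs_two] at habs
  nlinarith [hM c, sq_nonneg (x - t)]

lemma abs_sub_sub_deriv_mul_le_s4 {φ : ℝ → ℝ} (hφ : ContDiff ℝ 2 φ) {M : ℝ}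
    (hM : ∀ x, |deriv (deriv φ) x| ≤ M) (t x : ℝ) :
    |φ x - φ t - deriv φ t * (x - t)| ≤ M / 2 * (x - t) ^ 2 := by
  have hφ' : ContDiff ℝ 1 (deriv φ) := hφ.iterate_deriv' 1 1
  have hψ : ∀ s, HasDerivAt (fun s => φ s - φ t - deriv φ t * (s - t))
      (deriv φ s - deriv φ t) s := fun s => by
    simpa using (((hφ.differentiable two_ne_zero s).hasDerivAt.sub_const (φ t)).fun_sub
      (((hasDerivAt_id s).sub_const t).const_mul (deriv φ t)))
  refine abs_le_of_abs_deriv_le_mul_abs (fun s => (hψ s).differentiableAt) (by simp)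
    (fun s => ?_) x
  rw [(hψ s).deriv]
  exact norm_sub_le_mul_abs_of_norm_deriv_le (hφ'.differentiable one_ne_zero) hM t s

lemma norm_cexp_two_pi_I_sub_le (a b : ℝ) :
    ‖cexp (2 * π * I * a) - cexp (2 * π * I * b)‖ ≤ 2 * π * |a - b| := by
  have h : cexp (2 * π * I * a) - cexp (2 * π * I * b)
      = cexp (2 * π * I * b) * (cexp (I * ↑(2 * π * (a - b))) - 1) := by
    rw [mul_sub, ← Complex.exp_add, mul_one]; congr 2; push_cast; ring
  rw [h, norm_mul, Complex.norm_exp]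
  simpa [abs_of_pos Real.pi_pos] using Real.norm_exp_I_mul_ofReal_sub_one_le (x := 2 * π * (a - b))

lemma eq_zero_of_support_subset_Icc {E : Type*} [TopologicalSpace E] [T2Space E] [Zero E]
    {f : ℝ → E} (hf : Continuous f) {c : ℝ} (hsupp : support f ⊆ Icc (-c) c) {ξ : ℝ}
    (hξ : c ≤ |ξ|) : f ξ = 0 := by
  have hout : Ioi c ∪ Iio (-c) ⊆ {ξ | f ξ = 0} := by
    intro ζ hζ
    by_contra hne
    obtain ⟨h₁, h₂⟩ := hsupp hne
    rcases hζ with hζ | hζ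
    · exact (mem_Ioi.1 hζ).not_ge h₂
    · exact (mem_Iio.1 hζ).not_ge h₁
  refine (isClosed_eq hf continuous_const).closure_subset_iff.2 hout ?_
  rw [closure_union, closure_Ioi, closure_Iio]
  rcases le_abs'.1 hξ with h | h
  · exact Or.inr (by simpa using h)
  · exact Or.inl h

noncomputable def stftIntegrand (g f : ℝ → ℂ) (t η x : ℝ) : ℂ :=
  f x * g (x - t) * cexp (-(2 * π * I * (η : ℂ) * ((x : ℂ) - t)))

noncomputable def stft (g f : ℝ → ℂ) (t η : ℝ) : ℂ :=
  ∫ x : ℝ, stftIntegrand g f t η x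

section stft

variable {g : ℝ → ℂ} {t η : ℝ}

lemma norm_stftIntegrand (f : ℝ → ℂ) (x : ℝ) :
    ‖stftIntegrand g f t η x‖ = ‖f x‖ * ‖g (x - t)‖ := by
  simp [stftIntegrand, Complex.norm_exp]

lemma integrable_stftIntegrand (hg : Integrable g) {f : ℝ → ℂ} (hf : AEStronglyMeasurable f)
    {M : ℝ} (hM : ∀ x, ‖f x‖ ≤ M) : Integrable (stftIntegrand g f t η) := by
  refine ((hg.comp_sub_right t).norm.const_mul M).mono' ?_ (ae_of_all _ fun x => ?_)
  · exact (hf.mul (hg.comp_sub_right t).1).mul (by fun_prop : Continuous _).aestronglyMeasurable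
  · rw [norm_stftIntegrand]
    exact mul_le_mul_of_nonneg_right (hM x) (norm_nonneg _)

lemma stft_sub {f h : ℝ → ℂ} (hf : Integrable (stftIntegrand g f t η))
    (hh : Integrable (stftIntegrand g h t η)) :
    stft g (f - h) t η = stft g f t η - stft g h t η := by
  rw [stft, stft, stft, ← integral_sub hf hh]
  congr 1 with x
  simp only [stftIntegrand, Pi.sub_apply]
  ring

lemma stft_finsetSum {ι : Type*} {s : Finset ι} {f : ι → ℝ → ℂ}
    (hf : ∀ i ∈ s, Integrable (stftIntegrand g (f i) t η)) :
    stft g (fun x => ∑ i ∈ s, f i x) t η = ∑ i ∈ s, stft g (f i) t η := by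
  simp only [stft]
  rw [← integral_finsetSum s hf]
  congr 1 with x
  simp only [stftIntegrand, Finset.sum_mul]

lemma norm_stft_le {f : ℝ → ℂ} {b : ℝ → ℝ} (hf : ∀ x, ‖f x‖ ≤ b (x - t))
    (hb : Integrable fun u => b u * ‖g u‖) : ‖stft g f t η‖ ≤ ∫ u, b u * ‖g u‖ := by
  rw [← integral_sub_right_eq_self _ t]
  refine norm_integral_le_of_norm_le (hb.comp_sub_right t) (ae_of_all _ fun x => ?_)
  rw [norm_stftIntegrand]
  exact mul_le_mul_of_nonneg_right (hf x) (norm_nonneg _)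

lemma stft_linearChirp (a θ c : ℝ) :
    stft g (fun x => a * cexp (2 * π * I * ↑(θ + c * (x - t)))) t η
      = a * cexp (2 * π * I * θ) * 𝓕 g (η - c) := by
  rw [Real.fourier_real_eq_integral_exp_smul, ← integral_const_mul,
    ← integral_sub_right_eq_self _ t, stft]
  congr 1 with x
  calc stftIntegrand g _ t η x
      = a * g (x - t) * cexp (2 * π * I * ↑(θ + c * (x - t)) + -(2 * π * I * η * (x - t))) := by
        rw [stftIntegrand, Complex.exp_add]; ring
    _ = a * g (x - t) * cexp (2 * π * I * θ + ↑(-2 * π * (x - t) * (η - c)) * I) := by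
        congr 2; push_cast; ring
    _ = _ := by rw [Complex.exp_add, smul_eq_mul]; ring

end stft

noncomputable def imf (A φ : ℝ → ℝ) (x : ℝ) : ℂ :=
  A x * cexp (2 * π * I * φ x)

section imf

variable {A φ : ℝ → ℝ} {MA CA Cφ : ℝ}

lemma norm_imf (x : ℝ) : ‖imf A φ x‖ = |A x| := by
  simp [imf, Complex.norm_exp]

lemma integrable_stftIntegrand_imf {g : ℝ → ℂ} (hg : Integrable g) (hA : Continuous A)
    (hφ : Continuous φ) (hMA : ∀ x, |A x| ≤ MA) (t η : ℝ) :
    Integrable (stftIntegrand g (imf A φ) t η) :=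
  integrable_stftIntegrand hg (by unfold imf; fun_prop : Continuous (imf A φ)).aestronglyMeasurable
    fun x => (norm_imf x).trans_le (hMA x)

lemma norm_imf_sub_linearChirp_le (hA : Differentiable ℝ A) (hφ : ContDiff ℝ 2 φ)
    (hMA : ∀ x, |A x| ≤ MA) (hA' : ∀ x, |deriv A x| ≤ CA)
    (hφ'' : ∀ x, |deriv (deriv φ) x| ≤ Cφ) (t x : ℝ) :
    ‖imf A φ x - A t * cexp (2 * π * I * ↑(φ t + deriv φ t * (x - t)))‖
      ≤ CA * |x - t| + π * MA * Cφ * |x - t| ^ 2 := by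
  set E₁ := cexp (2 * π * I * φ x)
  set E₂ := cexp (2 * π * I * ↑(φ t + deriv φ t * (x - t)))
  have hE₁ : ‖E₁‖ = 1 := by simp [E₁, Complex.norm_exp]
  have hphase : ‖E₁ - E₂‖ ≤ 2 * π * (Cφ / 2 * (x - t) ^ 2) := by
    refine (norm_cexp_two_pi_I_sub_le _ _).trans (mul_le_mul_of_nonneg_left ?_ (by positivity))
    rw [← sub_sub]
    exact abs_sub_sub_deriv_mul_le_s4 hφ hφ'' t x
  calc ‖imf A φ x - A t * E₂‖ = ‖(↑(A x - A t) : ℂ) * E₁ + A t * (E₁ - E₂)‖ := by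
        show ‖(A x : ℂ) * E₁ - A t * E₂‖ = _
        push_cast; congr 1; ring
    _ ≤ |A x - A t| + |A t| * ‖E₁ - E₂‖ := by
        refine (norm_add_le _ _).trans_eq ?_
        rw [norm_mul, norm_mul, hE₁, mul_one, norm_real, norm_real, Real.norm_eq_abs,
          Real.norm_eq_abs]
    _ ≤ CA * |x - t| + MA * (2 * π * (Cφ / 2 * (x - t) ^ 2)) := by
        gcongr
        · exact norm_sub_le_mul_abs_of_norm_deriv_le hA hA' t x
        · exact (abs_nonneg _).trans (hMA 0)
        · exact hMA t
    _ = CA * |x - t| + π * MA * Cφ * |x - t| ^ 2 := by rw [sq_abs]; ring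

lemma SchwartzMap.integrable_abs_pow_mul_norm (g : SchwartzMap ℝ ℂ) (n : ℕ) :
    Integrable fun u : ℝ => |u| ^ n * ‖g u‖ := by
  simpa only [Real.norm_eq_abs] using g.integrable_pow_mul volume n

lemma norm_stft_imf_le (g : SchwartzMap ℝ ℂ) (hA : ContDiff ℝ 1 A) (hφ : ContDiff ℝ 2 φ)
    (hMA : ∀ x, |A x| ≤ MA) (hA' : ∀ x, |deriv A x| ≤ CA)
    (hφ'' : ∀ x, |deriv (deriv φ) x| ≤ Cφ) {t η : ℝ} (hĝ : 𝓕 (⇑g) (η - deriv φ t) = 0) :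
    ‖stft g (imf A φ) t η‖
      ≤ CA * (∫ u, |u| * ‖g u‖) + π * MA * Cφ * ∫ u, |u| ^ 2 * ‖g u‖ := by
  set p : ℝ → ℂ := fun x => A t * cexp (2 * π * I * ↑(φ t + deriv φ t * (x - t)))
  have hp : stft g p t η = 0 := by rw [stft_linearChirp, hĝ, mul_zero]
  have hint_p : Integrable (stftIntegrand g p t η) :=
    integrable_stftIntegrand (M := |A t|) g.integrable
      (by fun_prop : Continuous p).aestronglyMeasurable fun x => by simp [p, Complex.norm_exp]
  have hmom₁ := g.integrable_abs_pow_mul_norm 1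
  have hmom₂ := g.integrable_abs_pow_mul_norm 2
  simp only [pow_one] at hmom₁
  have hsplit : ∀ u : ℝ, (CA * |u| + π * MA * Cφ * |u| ^ 2) * ‖g u‖
      = CA * (|u| * ‖g u‖) + π * MA * Cφ * (|u| ^ 2 * ‖g u‖) := fun u => by ring
  calc ‖stft g (imf A φ) t η‖ = ‖stft g (imf A φ - p) t η‖ := by
        rw [stft_sub (integrable_stftIntegrand_imf g.integrable hA.continuous hφ.continuous hMA t η)
          hint_p, hp, sub_zero]
    _ ≤ ∫ u, (CA * |u| + π * MA * Cφ * |u| ^ 2) * ‖g u‖ := by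
        refine norm_stft_le (fun x => ?_) ?_
        · exact norm_imf_sub_linearChirp_le (hA.differentiable one_ne_zero) hφ hMA hA' hφ'' t x
        · simp only [hsplit]
          exact (hmom₁.const_mul _).add (hmom₂.const_mul _)
    _ = CA * (∫ u, |u| * ‖g u‖) + π * MA * Cφ * ∫ u, |u| ^ 2 * ‖g u‖ := by
        simp only [hsplit]
        rw [integral_add (hmom₁.const_mul _) (hmom₂.const_mul _), integral_const_mul,
          integral_const_mul]

end imf

theorem stft_small_off_frequency_zones_general
    (K : ℕ) (A φ : ℕ → ℝ → ℝ)
    (hA : ∀ k < K, ContDiff ℝ 1 (A k)) (hφ : ∀ k < K, ContDiff ℝ 2 (φ k))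
    (ε : ℝ) (MA Mφ' : ℕ → ℝ)
    (hMA : ∀ k < K, ∀ x, |A k x| ≤ MA k)
    (hA' : ∀ k < K, ∀ x, |deriv (A k) x| ≤ ε * Mφ' k)
    (hφ'' : ∀ k < K, ∀ x, |deriv (deriv (φ k)) x| ≤ ε * Mφ' k)
    (d : ℝ)
    (g : SchwartzMap ℝ ℂ)
    (hg : Function.support (fun ξ => FourierTransform.fourier (fun u : ℝ => g u) ξ)
            ⊆ Set.Icc (-(d / 2)) (d / 2))
    (I₁ I₂ : ℝ)
    (hI₁ : I₁ = ∫ u : ℝ, |u| * ‖g u‖)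
    (hI₂ : I₂ = ∫ u : ℝ, |u| ^ 2 * ‖g u‖)
    (t η : ℝ) (hoff : ∀ k < K, d / 2 ≤ |η - deriv (φ k) t|) :
    ‖(∫ x : ℝ, (∑ k ∈ Finset.range K,
              (A k x : ℂ) * Complex.exp (2 * Real.pi * Complex.I * (φ k x : ℂ))) *
            g (x - t) * Complex.exp (-(2 * Real.pi * Complex.I * (η : ℂ) * ((x : ℂ) - t))))‖
      ≤ ∑ k ∈ Finset.range K, ε * Mφ' k * (I₁ + Real.pi * MA k * I₂) := by
  subst hI₁ hI₂
  have hĝ_cont : Continuous (𝓕 (⇑g)) :=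
    VectorFourier.fourierIntegral_continuous Real.continuous_fourierChar (by fun_prop) g.integrable
  change ‖stft g (fun x => ∑ k ∈ Finset.range K, imf (A k) (φ k) x) t η‖ ≤ _
  have hint : ∀ k ∈ Finset.range K, Integrable (stftIntegrand g (imf (A k) (φ k)) t η) := by
    intro k hk
    rw [Finset.mem_range] at hk
    exact integrable_stftIntegrand_imf g.integrable (hA k hk).continuous (hφ k hk).continuous
      (hMA k hk) t η
  rw [stft_finsetSum hint]
  refine (norm_sum_le _ _).trans (Finset.sum_le_sum fun k hk => ?_)
  rw [Finset.mem_range] at hk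
  have hĝ : 𝓕 (⇑g) (η - deriv (φ k) t) = 0 :=
    eq_zero_of_support_subset_Icc hĝ_cont hg (hoff k hk)
  refine (norm_stft_imf_le g (hA k hk) (hφ k hk) (hMA k hk) (hA' k hk) (hφ'' k hk) hĝ).trans_eq ?_
  ring

/-- For a superposition `f = Σ_{k<K} A_k e^{2πiφ_k}` of IMFs whose instantaneous
frequencies are separated by `d`, and a Schwartz window `g` with `supp ĝ ⊂ [-d/2,d/2]`,
if `(t,η)` is at distance `≥ d/2` from every `φ'_k(t)`, then
`|V_g f(t,η)| ≤ Σ_k ε‖φ'_k‖∞ (I₁ + π‖A_k‖∞ I₂)`. -/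
theorem stft_small_off_frequency_zones
    (K : ℕ) (A φ : ℕ → ℝ → ℝ)
    (hA : ∀ k < K, ContDiff ℝ 1 (A k)) (hφ : ∀ k < K, ContDiff ℝ 2 (φ k))
    (hApos : ∀ k < K, ∀ x, 0 < A k x) (hφ'pos : ∀ k < K, ∀ x, 0 < deriv (φ k) x)
    (ε : ℝ) (hε : 0 < ε) (MA Mφ' : ℕ → ℝ)
    (hMA : ∀ k < K, ∀ x, |A k x| ≤ MA k)
    (hMφ' : ∀ k < K, ∀ x, |deriv (φ k) x| ≤ Mφ' k)
    (hA' : ∀ k < K, ∀ x, |deriv (A k) x| ≤ ε * Mφ' k)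
    (hφ'' : ∀ k < K, ∀ x, |deriv (deriv (φ k)) x| ≤ ε * Mφ' k)
    (d : ℝ) (hd : 0 < d)
    (hsep : ∀ k, k + 1 < K → ∀ s u : ℝ, deriv (φ (k + 1)) s - deriv (φ k) u > d)
    (g : SchwartzMap ℝ ℂ)
    (hg : Function.support (fun ξ => FourierTransform.fourier (fun u : ℝ => g u) ξ)
            ⊆ Set.Icc (-(d / 2)) (d / 2))
    (I₁ I₂ : ℝ)
    (hI₁ : I₁ = ∫ u : ℝ, |u| * ‖g u‖)
    (hI₂ : I₂ = ∫ u : ℝ, |u| ^ 2 * ‖g u‖)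
    (t η : ℝ) (hoff : ∀ k < K, d / 2 ≤ |η - deriv (φ k) t|) :
    ‖(∫ x : ℝ, (∑ k ∈ Finset.range K,
              (A k x : ℂ) * Complex.exp (2 * Real.pi * Complex.I * (φ k x : ℂ))) *
            g (x - t) * Complex.exp (-(2 * Real.pi * Complex.I * (η : ℂ) * ((x : ℂ) - t))))‖
      ≤ ∑ k ∈ Finset.range K, ε * Mφ' k * (I₁ + Real.pi * MA k * I₂) :=
  stft_small_off_frequency_zones_general K A φ hA hφ ε MA Mφ' hMA hA' hφ'' d g hg I₁ I₂ hI₁ hI₂ t η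
    hoff
end

section
/- Let A, φ : ℝ → ℝ be smooth with A, A', φ', φ'' bounded, g ∈ 𝒮(ℝ), t, η, ξ ∈ ℝ, and J > 0 with |φ'(u) - η - ξ| ≥ J for all u. Define G(u) = 2πi A(u)(φ'(u)-η)g(u-t)e^{2πi(φ(u)-uη)}. Then its Fourier transform satisfies |Ĝ(ξ)| ≤ C(1 + |η|)(1/J + 1/J²) for a constant C depending only on A, φ, g (via sup norms of A, A', φ', φ'' and the moments I₀ = ∫|g|, I₀' = ∫|g'|). -/
open Complex MeasureTheory

set_option maxHeartbeats 1000000 in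
/-- Integration-by-parts bound on the Fourier transform of
`G(u) = 2πi A(u)(φ'(u)-η) g(u-t) e^{2πi(φ(u)-uη)}`: there is a constant `C`
depending only on `A, φ, g` such that whenever `|φ'(u) - η - ξ| ≥ J > 0` for all `u`,
`|Ĝ(ξ)| ≤ C(1+|η|)(1/J + 1/J²)`. -/
theorem fourier_bound_off_frequency
    (A φ : ℝ → ℝ) (hA : ContDiff ℝ (⊤ : ℕ∞) A) (hφ : ContDiff ℝ (⊤ : ℕ∞) φ)
    (MA MA' Mφ' Mφ'' : ℝ)
    (hMA : ∀ x, |A x| ≤ MA) (hMA' : ∀ x, |deriv A x| ≤ MA')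
    (hMφ' : ∀ x, |deriv φ x| ≤ Mφ') (hMφ'' : ∀ x, |deriv (deriv φ) x| ≤ Mφ'')
    (g : SchwartzMap ℝ ℂ) :
    ∃ C : ℝ, 0 < C ∧ ∀ t η ξ J : ℝ, 0 < J →
      (∀ u : ℝ, J ≤ |deriv φ u - η - ξ|) →
      ‖VectorFourier.fourierIntegral Real.fourierChar volume (innerₗ ℝ)
          (fun u : ℝ => 2 * Real.pi * Complex.I * (A u : ℂ) *
            Complex.ofReal (deriv φ u - η) * g (u - t) *
            Complex.exp (2 * Real.pi * Complex.I * ((φ u : ℂ) - (u : ℂ) * (η : ℂ)))) ξ‖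
        ≤ C * (1 + |η|) * (1 / J + 1 / J ^ 2) := by
  have hA1 := contDiff_infty_iff_deriv.mp (hA.of_le (by simp) : ContDiff ℝ (⊤ : ℕ∞) A)
  have hφ1 := contDiff_infty_iff_deriv.mp (hφ.of_le (by simp) : ContDiff ℝ (⊤ : ℕ∞) φ)
  have hφ2 := contDiff_infty_iff_deriv.mp hφ1.2
  set g' : SchwartzMap ℝ ℂ := SchwartzMap.derivCLM ℝ ℂ g with hg'def
  have hg'eq : (⇑g' : ℝ → ℂ) = deriv (⇑g) := funext fun x => SchwartzMap.derivCLM_apply ℝ g x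
  set I₀ : ℝ := ∫ x, ‖g x‖ with hI0
  set I₁ : ℝ := ∫ x, ‖g' x‖ with hI1
  have hMA0 : 0 ≤ MA := le_trans (abs_nonneg _) (hMA 0)
  have hMA'0 : 0 ≤ MA' := le_trans (abs_nonneg _) (hMA' 0)
  have hMφ'0 : 0 ≤ Mφ' := le_trans (abs_nonneg _) (hMφ' 0)
  have hMφ''0 : 0 ≤ Mφ'' := le_trans (abs_nonneg _) (hMφ'' 0)
  set K : ℝ := MA' * (Mφ' + 1) + MA * Mφ'' + MA * (Mφ' + 1) + MA * (Mφ' + 1) * Mφ'' with hK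
  have hK0 : 0 ≤ K := by positivity
  have hI00 : 0 ≤ I₀ := integral_nonneg fun x => norm_nonneg _
  have hI10 : 0 ≤ I₁ := integral_nonneg fun x => norm_nonneg _
  refine ⟨K * (I₀ + I₁) + 1, by nlinarith [mul_nonneg hK0 (add_nonneg hI00 hI10)], ?_⟩
  intro t η ξ J hJ hlb
  have hη0 : (0:ℝ) ≤ 1 + |η| := by positivity
  have hne : ∀ u, deriv φ u - η - ξ ≠ 0 := by
    intro u h
    have := hlb u
    rw [h, abs_zero] at this
    linarith
  have hneC : ∀ u, ((deriv φ u - η - ξ : ℝ) : ℂ) ≠ 0 := fun u =>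
    Complex.ofReal_ne_zero.mpr (hne u)
  set θ : ℝ → ℝ := fun u => φ u - u * (η + ξ) with hθ
  set P : ℝ → ℂ := fun u => ((A u : ℝ) : ℂ) * ((deriv φ u - η : ℝ) : ℂ) * g (u - t) with hPdef
  set P' : ℝ → ℂ := fun u =>
      ((deriv A u : ℝ) : ℂ) * ((deriv φ u - η : ℝ) : ℂ) * g (u - t)
      + ((A u : ℝ) : ℂ) * ((deriv (deriv φ) u : ℝ) : ℂ) * g (u - t)
      + ((A u : ℝ) : ℂ) * ((deriv φ u - η : ℝ) : ℂ) * deriv (⇑g) (u - t) with hP'def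
  set e : ℝ → ℂ := fun u => Complex.exp (2 * Real.pi * Complex.I * (θ u : ℂ)) with hedef
  set Q : ℝ → ℂ := fun u =>
      (P' u * ((deriv φ u - η - ξ : ℝ) : ℂ)⁻¹
        - P u * ((deriv (deriv φ) u : ℝ) : ℂ) * (((deriv φ u - η - ξ : ℝ) : ℂ) ^ 2)⁻¹) * e u
      with hQdef
  set R : ℝ → ℂ := fun u => 2 * Real.pi * Complex.I * P u * e u with hRdef
  set F : ℝ → ℂ := fun u => P u * ((deriv φ u - η - ξ : ℝ) : ℂ)⁻¹ * e u with hFdef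
  -- derivative facts
  have hdg : ∀ u : ℝ, HasDerivAt (fun v => g (v - t)) (deriv (⇑g) (u - t)) u := by
    intro u
    have h1 : HasDerivAt (⇑g) (deriv (⇑g) (u - t)) (u - t) := g.differentiableAt.hasDerivAt
    exact h1.comp_sub_const u t
  have hdP : ∀ u, HasDerivAt P (P' u) u := by
    intro u
    have hda : HasDerivAt (fun v => ((A v : ℝ) : ℂ)) (((deriv A u : ℝ) : ℂ)) u :=
      ((hA1.1 u).hasDerivAt).ofReal_comp
    have hdb : HasDerivAt (fun v => ((deriv φ v - η : ℝ) : ℂ)) (((deriv (deriv φ) u : ℝ) : ℂ)) u :=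
      (((hφ2.1 u).hasDerivAt).sub_const η).ofReal_comp
    have := (hda.fun_mul hdb).fun_mul (hdg u)
    refine this.congr_deriv ?_
    simp only [hP'def]
    push_cast
    ring
  have hdinv : ∀ u, HasDerivAt (fun v => ((deriv φ v - η - ξ : ℝ) : ℂ)⁻¹)
      (-((deriv (deriv φ) u : ℝ) : ℂ) / ((deriv φ u - η - ξ : ℝ) : ℂ) ^ 2) u := by
    intro u
    have hdψ : HasDerivAt (fun v => ((deriv φ v - η - ξ : ℝ) : ℂ))
        (((deriv (deriv φ) u : ℝ) : ℂ)) u :=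
      ((((hφ2.1 u).hasDerivAt).sub_const η).sub_const ξ).ofReal_comp
    have h := (hasDerivAt_const u (1:ℂ)).fun_div hdψ (hneC u)
    simp only [one_div] at h
    refine h.congr_deriv ?_
    ring
  have hde : ∀ u, HasDerivAt e
      (2 * Real.pi * Complex.I * ((deriv φ u - η - ξ : ℝ) : ℂ) * e u) u := by
    intro u
    have hθd : HasDerivAt θ (deriv φ u - η - ξ) u := by
      have := ((hφ1.1 u).hasDerivAt).fun_sub ((hasDerivAt_id u).mul_const (η + ξ))
      refine this.congr_deriv ?_
      ring
    have := ((hθd.ofReal_comp).const_mul (2 * (Real.pi : ℂ) * Complex.I)).cexp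
    convert this using 1
    ring
  have hdF : ∀ u, HasDerivAt F (Q u + R u) u := by
    intro u
    have := ((hdP u).fun_mul (hdinv u)).fun_mul (hde u)
    refine this.congr_deriv ?_
    simp only [hQdef, hRdef]
    set z : ℂ := ((deriv φ u - η - ξ : ℝ) : ℂ) with hz
    have hz0 : z ≠ 0 := hneC u
    field_simp
    ring
  -- continuity facts
  have cA : Continuous fun u => ((A u : ℝ) : ℂ) := Complex.continuous_ofReal.comp hA.continuous
  have cA' : Continuous fun u => ((deriv A u : ℝ) : ℂ) :=
    Complex.continuous_ofReal.comp hA1.2.continuous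
  have cφ' : Continuous fun u => ((deriv φ u - η : ℝ) : ℂ) :=
    Complex.continuous_ofReal.comp (hφ1.2.continuous.sub continuous_const)
  have cφ'' : Continuous fun u => ((deriv (deriv φ) u : ℝ) : ℂ) :=
    Complex.continuous_ofReal.comp hφ2.2.continuous
  have cg : Continuous fun u : ℝ => g (u - t) :=
    g.continuous.comp (continuous_id.sub continuous_const)
  have cg' : Continuous fun u : ℝ => deriv (⇑g) (u - t) := by
    rw [← hg'eq]
    exact g'.continuous.comp (continuous_id.sub continuous_const)
  have cψ : Continuous fun u => ((deriv φ u - η - ξ : ℝ) : ℂ) :=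
    Complex.continuous_ofReal.comp ((hφ1.2.continuous.sub continuous_const).sub continuous_const)
  have cψinv : Continuous fun u => ((deriv φ u - η - ξ : ℝ) : ℂ)⁻¹ := cψ.inv₀ hneC
  have ce : Continuous e := by
    exact Complex.continuous_exp.comp (continuous_const.mul
      (Complex.continuous_ofReal.comp ((hφ.continuous).sub (continuous_id.mul continuous_const))))
  have cP : Continuous P := (cA.mul cφ').mul cg
  have cP' : Continuous P' := (((cA'.mul cφ').mul cg).add ((cA.mul cφ'').mul cg)).add
    ((cA.mul cφ').mul cg')
  have cQ : Continuous Q := ((cP'.mul cψinv).sub ((cP.mul cφ'').mul ((cψ.pow 2).inv₀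
    (fun u => pow_ne_zero 2 (hneC u))))).mul ce
  have cR : Continuous R := (continuous_const.mul cP).mul ce
  -- norm facts
  have hnorme : ∀ u, ‖e u‖ = 1 := by
    intro u
    have h : 2 * (Real.pi : ℂ) * Complex.I * (θ u : ℂ) = ((2 * Real.pi * θ u : ℝ) : ℂ) * Complex.I := by
      push_cast; ring
    rw [hedef]
    simp only [h]
    rw [Complex.norm_exp_ofReal_mul_I]
  have hinvle : ∀ u, ‖((deriv φ u - η - ξ : ℝ) : ℂ)⁻¹‖ ≤ 1 / J := by
    intro u
    rw [norm_inv, Complex.norm_real, Real.norm_eq_abs]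
    rw [one_div]
    exact inv_anti₀ hJ (hlb u)
  have hinv2le : ∀ u, ‖(((deriv φ u - η - ξ : ℝ) : ℂ) ^ 2)⁻¹‖ ≤ 1 / J ^ 2 := by
    intro u
    rw [norm_inv, norm_pow, Complex.norm_real, Real.norm_eq_abs, one_div]
    apply inv_anti₀ (by positivity)
    exact pow_le_pow_left₀ hJ.le (hlb u) 2
  have hPb : ∀ u, ‖P u‖ ≤ MA * ((Mφ' + 1) * (1 + |η|)) * ‖g (u - t)‖ := by
    intro u
    rw [hPdef]
    simp only [norm_mul, Complex.norm_real, Real.norm_eq_abs]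
    have h1 : |deriv φ u - η| ≤ (Mφ' + 1) * (1 + |η|) := by
      calc |deriv φ u - η| ≤ |deriv φ u| + |η| := abs_sub _ _
        _ ≤ Mφ' + |η| := by linarith [hMφ' u]
        _ ≤ (Mφ' + 1) * (1 + |η|) := by nlinarith [abs_nonneg η]
    have hgn : (0:ℝ) ≤ ‖g (u - t)‖ := norm_nonneg _
    exact mul_le_mul (mul_le_mul (hMA u) h1 (abs_nonneg _) hMA0) le_rfl hgn
      (mul_nonneg hMA0 (by positivity))
  have hP'b : ∀ u, ‖P' u‖ ≤ (MA' * (Mφ' + 1) + MA * Mφ'') * (1 + |η|) * ‖g (u - t)‖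
      + MA * (Mφ' + 1) * (1 + |η|) * ‖deriv (⇑g) (u - t)‖ := by
    intro u
    simp only [hP'def]
    have h1 : |deriv φ u - η| ≤ (Mφ' + 1) * (1 + |η|) := by
      calc |deriv φ u - η| ≤ |deriv φ u| + |η| := abs_sub _ _
        _ ≤ Mφ' + |η| := by linarith [hMφ' u]
        _ ≤ (Mφ' + 1) * (1 + |η|) := by nlinarith [abs_nonneg η]
    have hgn : (0:ℝ) ≤ ‖g (u - t)‖ := norm_nonneg _
    have hgn' : (0:ℝ) ≤ ‖deriv (⇑g) (u - t)‖ := norm_nonneg _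
    calc ‖((deriv A u : ℝ) : ℂ) * ((deriv φ u - η : ℝ) : ℂ) * g (u - t)
          + ((A u : ℝ) : ℂ) * ((deriv (deriv φ) u : ℝ) : ℂ) * g (u - t)
          + ((A u : ℝ) : ℂ) * ((deriv φ u - η : ℝ) : ℂ) * deriv (⇑g) (u - t)‖
        ≤ ‖((deriv A u : ℝ) : ℂ) * ((deriv φ u - η : ℝ) : ℂ) * g (u - t)‖
          + ‖((A u : ℝ) : ℂ) * ((deriv (deriv φ) u : ℝ) : ℂ) * g (u - t)‖
          + ‖((A u : ℝ) : ℂ) * ((deriv φ u - η : ℝ) : ℂ) * deriv (⇑g) (u - t)‖ :=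
            norm_add₃_le
      _ ≤ (MA' * (Mφ' + 1) + MA * Mφ'') * (1 + |η|) * ‖g (u - t)‖
          + MA * (Mφ' + 1) * (1 + |η|) * ‖deriv (⇑g) (u - t)‖ := by
          simp only [norm_mul, Complex.norm_real, Real.norm_eq_abs]
          have h2 := hMA u; have h3 := hMA' u; have h4 := hMφ'' u
          have ha1 : |deriv A u| * |deriv φ u - η| * ‖g (u - t)‖
              ≤ MA' * ((Mφ' + 1) * (1 + |η|)) * ‖g (u - t)‖ := by
            apply mul_le_mul _ le_rfl hgn (mul_nonneg hMA'0 (by positivity))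
            exact mul_le_mul h3 h1 (abs_nonneg _) hMA'0
          have ha2 : |A u| * |deriv (deriv φ) u| * ‖g (u - t)‖
              ≤ MA * Mφ'' * ‖g (u - t)‖ := by
            apply mul_le_mul _ le_rfl hgn (mul_nonneg hMA0 hMφ''0)
            exact mul_le_mul h2 h4 (abs_nonneg _) hMA0
          have ha3 : |A u| * |deriv φ u - η| * ‖deriv (⇑g) (u - t)‖
              ≤ MA * ((Mφ' + 1) * (1 + |η|)) * ‖deriv (⇑g) (u - t)‖ := by
            apply mul_le_mul _ le_rfl hgn' (mul_nonneg hMA0 (by positivity))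
            exact mul_le_mul h2 h1 (abs_nonneg _) hMA0
          nlinarith [ha1, ha2, ha3,
            mul_nonneg (mul_nonneg (mul_nonneg hMA0 hMφ''0) hgn) (abs_nonneg η)]
  have hQb : ∀ u, ‖Q u‖ ≤ K * (1 + |η|) * (1 / J + 1 / J ^ 2)
      * (‖g (u - t)‖ + ‖deriv (⇑g) (u - t)‖) := by
    intro u
    have hgn : (0:ℝ) ≤ ‖g (u - t)‖ := norm_nonneg _
    have hgn' : (0:ℝ) ≤ ‖deriv (⇑g) (u - t)‖ := norm_nonneg _
    have hJ1 : (0:ℝ) ≤ 1 / J := by positivity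
    have hJ2 : (0:ℝ) ≤ 1 / J ^ 2 := by positivity
    have h0 : ‖Q u‖ ≤ ‖P' u‖ * (1 / J) + ‖P u‖ * Mφ'' * (1 / J ^ 2) := by
      rw [hQdef]
      simp only [norm_mul, hnorme u, mul_one]
      calc ‖P' u * ((deriv φ u - η - ξ : ℝ) : ℂ)⁻¹
            - P u * ((deriv (deriv φ) u : ℝ) : ℂ) * (((deriv φ u - η - ξ : ℝ) : ℂ) ^ 2)⁻¹‖
          ≤ ‖P' u * ((deriv φ u - η - ξ : ℝ) : ℂ)⁻¹‖
            + ‖P u * ((deriv (deriv φ) u : ℝ) : ℂ) * (((deriv φ u - η - ξ : ℝ) : ℂ) ^ 2)⁻¹‖ :=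
              norm_sub_le _ _
        _ ≤ ‖P' u‖ * (1 / J) + ‖P u‖ * Mφ'' * (1 / J ^ 2) := by
            rw [norm_mul, norm_mul, norm_mul, Complex.norm_real, Real.norm_eq_abs]
            have := hMφ'' u
            have := hinvle u
            have := hinv2le u
            have h1 : ‖P' u‖ * ‖((deriv φ u - η - ξ : ℝ) : ℂ)⁻¹‖ ≤ ‖P' u‖ * (1 / J) :=
              mul_le_mul_of_nonneg_left (hinvle u) (norm_nonneg _)
            have h2 : ‖P u‖ * |deriv (deriv φ) u| * ‖(((deriv φ u - η - ξ : ℝ) : ℂ) ^ 2)⁻¹‖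
                ≤ ‖P u‖ * Mφ'' * (1 / J ^ 2) := by
              apply mul_le_mul _ (hinv2le u) (norm_nonneg _) (by positivity)
              exact mul_le_mul_of_nonneg_left (hMφ'' u) (norm_nonneg _)
            linarith
    have hP1 := hPb u
    have hP2 := hP'b u
    have hKb1 : (MA' * (Mφ' + 1) + MA * Mφ'') * (1 + |η|) ≤ K * (1 + |η|) := by
      apply mul_le_mul_of_nonneg_right _ hη0
      rw [hK]; nlinarith [mul_nonneg hMA0 (by positivity : (0:ℝ) ≤ Mφ' + 1),
        mul_nonneg (mul_nonneg hMA0 (by positivity : (0:ℝ) ≤ Mφ' + 1)) hMφ''0,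
        mul_nonneg hMA'0 (by positivity : (0:ℝ) ≤ Mφ' + 1), mul_nonneg hMA0 hMφ''0]
    have hKb2 : MA * (Mφ' + 1) * (1 + |η|) ≤ K * (1 + |η|) := by
      apply mul_le_mul_of_nonneg_right _ hη0
      rw [hK]; nlinarith [mul_nonneg hMA0 (by positivity : (0:ℝ) ≤ Mφ' + 1),
        mul_nonneg (mul_nonneg hMA0 (by positivity : (0:ℝ) ≤ Mφ' + 1)) hMφ''0,
        mul_nonneg hMA'0 (by positivity : (0:ℝ) ≤ Mφ' + 1), mul_nonneg hMA0 hMφ''0]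
    have hKb3 : MA * ((Mφ' + 1) * (1 + |η|)) * Mφ'' ≤ K * (1 + |η|) := by
      have : MA * ((Mφ' + 1) * (1 + |η|)) * Mφ'' = MA * (Mφ' + 1) * Mφ'' * (1 + |η|) := by ring
      rw [this]
      apply mul_le_mul_of_nonneg_right _ hη0
      rw [hK]; nlinarith [mul_nonneg hMA0 (by positivity : (0:ℝ) ≤ Mφ' + 1),
        mul_nonneg (mul_nonneg hMA0 (by positivity : (0:ℝ) ≤ Mφ' + 1)) hMφ''0,
        mul_nonneg hMA'0 (by positivity : (0:ℝ) ≤ Mφ' + 1), mul_nonneg hMA0 hMφ''0]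
    have hKη : (0:ℝ) ≤ K * (1 + |η|) := mul_nonneg hK0 hη0
    have hstep : ‖P' u‖ * (1 / J) + ‖P u‖ * Mφ'' * (1 / J ^ 2)
        ≤ K * (1 + |η|) * (1 / J + 1 / J ^ 2) * (‖g (u - t)‖ + ‖deriv (⇑g) (u - t)‖) := by
      have hb1 : ‖P' u‖ * (1 / J) ≤ K * (1 + |η|) * (‖g (u - t)‖ + ‖deriv (⇑g) (u - t)‖) * (1 / J) := by
        apply mul_le_mul_of_nonneg_right _ hJ1
        calc ‖P' u‖ ≤ (MA' * (Mφ' + 1) + MA * Mφ'') * (1 + |η|) * ‖g (u - t)‖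
            + MA * (Mφ' + 1) * (1 + |η|) * ‖deriv (⇑g) (u - t)‖ := hP2
          _ ≤ K * (1 + |η|) * ‖g (u - t)‖ + K * (1 + |η|) * ‖deriv (⇑g) (u - t)‖ := by
              have := mul_le_mul_of_nonneg_right hKb1 hgn
              have := mul_le_mul_of_nonneg_right hKb2 hgn'
              linarith
          _ = K * (1 + |η|) * (‖g (u - t)‖ + ‖deriv (⇑g) (u - t)‖) := by ring
      have hb2 : ‖P u‖ * Mφ'' * (1 / J ^ 2)
          ≤ K * (1 + |η|) * (‖g (u - t)‖ + ‖deriv (⇑g) (u - t)‖) * (1 / J ^ 2) := by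
        apply mul_le_mul_of_nonneg_right _ hJ2
        calc ‖P u‖ * Mφ'' ≤ MA * ((Mφ' + 1) * (1 + |η|)) * ‖g (u - t)‖ * Mφ'' :=
              mul_le_mul_of_nonneg_right hP1 hMφ''0
          _ = MA * ((Mφ' + 1) * (1 + |η|)) * Mφ'' * ‖g (u - t)‖ := by ring
          _ ≤ K * (1 + |η|) * ‖g (u - t)‖ := mul_le_mul_of_nonneg_right hKb3 hgn
          _ ≤ K * (1 + |η|) * (‖g (u - t)‖ + ‖deriv (⇑g) (u - t)‖) := by
              apply mul_le_mul_of_nonneg_left _ hKη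
              linarith
      calc ‖P' u‖ * (1 / J) + ‖P u‖ * Mφ'' * (1 / J ^ 2)
          ≤ K * (1 + |η|) * (‖g (u - t)‖ + ‖deriv (⇑g) (u - t)‖) * (1 / J)
            + K * (1 + |η|) * (‖g (u - t)‖ + ‖deriv (⇑g) (u - t)‖) * (1 / J ^ 2) := by
              linarith
        _ = K * (1 + |η|) * (1 / J + 1 / J ^ 2) * (‖g (u - t)‖ + ‖deriv (⇑g) (u - t)‖) := by
              ring
    linarith
  -- integrability
  have hgint : Integrable (fun u : ℝ => ‖g (u - t)‖) := (g.integrable.norm).comp_sub_right t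
  have hg'int : Integrable (fun u : ℝ => ‖deriv (⇑g) (u - t)‖) := by
    rw [← hg'eq]
    exact (g'.integrable.norm).comp_sub_right t
  have hDint : Integrable (fun u : ℝ => K * (1 + |η|) * (1 / J + 1 / J ^ 2)
      * (‖g (u - t)‖ + ‖deriv (⇑g) (u - t)‖)) := ((hgint.add hg'int).const_mul _)
  have hQint : Integrable Q :=
    hDint.mono' cQ.aestronglyMeasurable (Filter.Eventually.of_forall hQb)
  have hRb : ∀ u, ‖R u‖ ≤ 2 * Real.pi * (MA * ((Mφ' + 1) * (1 + |η|))) * ‖g (u - t)‖ := by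
    intro u
    rw [hRdef]
    have h1 : ‖(2 : ℂ) * (Real.pi : ℂ) * Complex.I * P u * e u‖ = 2 * Real.pi * ‖P u‖ := by
      simp only [norm_mul, hnorme u, mul_one, Complex.norm_I, Complex.norm_real,
        Complex.norm_ofNat, Real.norm_eq_abs, _root_.abs_of_nonneg Real.pi_pos.le]
    rw [h1]
    have := hPb u
    nlinarith [Real.pi_pos, norm_nonneg (P u)]
  have hRint : Integrable R := by
    apply Integrable.mono' (hgint.const_mul (2 * Real.pi * (MA * ((Mφ' + 1) * (1 + |η|)))))
      cR.aestronglyMeasurable (Filter.Eventually.of_forall hRb)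
  -- limits of F at ±∞
  have hFb : ∀ u, ‖F u‖ ≤ MA * ((Mφ' + 1) * (1 + |η|)) * (1 / J) * ‖g (u - t)‖ := by
    intro u
    rw [hFdef]
    simp only [norm_mul, hnorme u, mul_one]
    calc ‖P u‖ * ‖((deriv φ u - η - ξ : ℝ) : ℂ)⁻¹‖
        ≤ (MA * ((Mφ' + 1) * (1 + |η|)) * ‖g (u - t)‖) * (1 / J) := by
          apply mul_le_mul (hPb u) (hinvle u) (norm_nonneg _) (by positivity)
      _ = MA * ((Mφ' + 1) * (1 + |η|)) * (1 / J) * ‖g (u - t)‖ := by ring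
  have hgcoc : Filter.Tendsto (⇑g) (Filter.cocompact ℝ) (nhds 0) := zero_at_infty g
  have hsubtop : Filter.Tendsto (fun u : ℝ => u - t) Filter.atTop Filter.atTop :=
    Filter.tendsto_atTop_add_const_right _ (-t) Filter.tendsto_id
  have hsubbot : Filter.Tendsto (fun u : ℝ => u - t) Filter.atBot Filter.atBot :=
    Filter.tendsto_atBot_add_const_right _ (-t) Filter.tendsto_id
  have hgtop : Filter.Tendsto (fun u : ℝ => g (u - t)) Filter.atTop (nhds 0) :=
    (hgcoc.mono_left (by rw [cocompact_eq_atBot_atTop]; exact le_sup_right)).comp hsubtop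
  have hgbot : Filter.Tendsto (fun u : ℝ => g (u - t)) Filter.atBot (nhds 0) :=
    (hgcoc.mono_left (by rw [cocompact_eq_atBot_atTop]; exact le_sup_left)).comp hsubbot
  have hFtop : Filter.Tendsto F Filter.atTop (nhds 0) := by
    apply squeeze_zero_norm hFb
    have := (hgtop.norm).const_mul (MA * ((Mφ' + 1) * (1 + |η|)) * (1 / J))
    simpa using this
  have hFbot : Filter.Tendsto F Filter.atBot (nhds 0) := by
    apply squeeze_zero_norm hFb
    have := (hgbot.norm).const_mul (MA * ((Mφ' + 1) * (1 + |η|)) * (1 / J))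
    simpa using this
  -- integration by parts
  have hzero : ∫ u, (Q u + R u) = 0 := by
    rw [integral_of_hasDerivAt_of_tendsto hdF (hQint.add hRint) hFbot hFtop]
    simp
  have hsplit : ∫ u, (Q u + R u) = (∫ u, Q u) + ∫ u, R u := integral_add hQint hRint
  have hRQ : ∫ u, R u = -(∫ u, Q u) := by
    rw [hsplit] at hzero
    linear_combination hzero
  -- identify the Fourier integral with ∫ R
  have hfour : VectorFourier.fourierIntegral Real.fourierChar volume (innerₗ ℝ)
      (fun u : ℝ => 2 * Real.pi * Complex.I * ((A u : ℝ) : ℂ) *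
        Complex.ofReal (deriv φ u - η) * g (u - t) *
        Complex.exp (2 * Real.pi * Complex.I * ((φ u : ℂ) - (u : ℂ) * (η : ℂ)))) ξ
      = ∫ u, R u := by
    refine (Real.fourier_real_eq_integral_exp_smul _ ξ).trans ?_
    congr 1
    funext u
    rw [smul_eq_mul]
    simp only [hRdef, hPdef, hedef]
    have hexp : Complex.exp (((-2 * Real.pi * u * ξ : ℝ) : ℂ) * Complex.I) *
        Complex.exp (2 * Real.pi * Complex.I * ((φ u : ℂ) - (u : ℂ) * (η : ℂ)))
        = Complex.exp (2 * Real.pi * Complex.I * ((θ u : ℝ) : ℂ)) := by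
      rw [← Complex.exp_add]
      congr 1
      rw [hθ]
      push_cast
      ring
    calc Complex.exp (((-2 * Real.pi * u * ξ : ℝ) : ℂ) * Complex.I) *
          (2 * Real.pi * Complex.I * ((A u : ℝ) : ℂ) * Complex.ofReal (deriv φ u - η) * g (u - t) *
            Complex.exp (2 * Real.pi * Complex.I * ((φ u : ℂ) - (u : ℂ) * (η : ℂ))))
        = (2 * Real.pi * Complex.I * (((A u : ℝ) : ℂ) * ((deriv φ u - η : ℝ) : ℂ) * g (u - t))) *
          (Complex.exp (((-2 * Real.pi * u * ξ : ℝ) : ℂ) * Complex.I) *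
            Complex.exp (2 * Real.pi * Complex.I * ((φ u : ℂ) - (u : ℂ) * (η : ℂ)))) := by
          ring
      _ = 2 * Real.pi * Complex.I * (((A u : ℝ) : ℂ) * ((deriv φ u - η : ℝ) : ℂ) * g (u - t)) *
          Complex.exp (2 * Real.pi * Complex.I * ((θ u : ℝ) : ℂ)) := by rw [hexp]
  have habs : ‖VectorFourier.fourierIntegral Real.fourierChar volume (innerₗ ℝ)
      (fun u : ℝ => 2 * Real.pi * Complex.I * ((A u : ℝ) : ℂ) *
        Complex.ofReal (deriv φ u - η) * g (u - t) *
        Complex.exp (2 * Real.pi * Complex.I * ((φ u : ℂ) - (u : ℂ) * (η : ℂ)))) ξ‖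
      = ‖∫ u, Q u‖ := by
    rw [hfour, hRQ, norm_neg]
  rw [habs]
  have hle : ‖∫ u, Q u‖ ≤ ∫ u, K * (1 + |η|) * (1 / J + 1 / J ^ 2)
      * (‖g (u - t)‖ + ‖deriv (⇑g) (u - t)‖) :=
    norm_integral_le_of_norm_le hDint (Filter.Eventually.of_forall hQb)
  have hval : (∫ u, K * (1 + |η|) * (1 / J + 1 / J ^ 2)
      * (‖g (u - t)‖ + ‖deriv (⇑g) (u - t)‖))
      = K * (1 + |η|) * (1 / J + 1 / J ^ 2) * (I₀ + I₁) := by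
    rw [integral_const_mul, integral_add hgint hg'int]
    have e1 : (∫ u : ℝ, ‖g (u - t)‖) = I₀ := integral_sub_right_eq_self (fun x : ℝ => ‖g x‖) t
    have e2 : (∫ u : ℝ, ‖deriv (⇑g) (u - t)‖) = I₁ := by
      rw [← hg'eq]
      exact integral_sub_right_eq_self (fun x : ℝ => ‖g' x‖) t
    rw [e1, e2]
  rw [hval] at hle
  refine le_trans hle ?_
  have hfac : (0:ℝ) ≤ (1 + |η|) * (1 / J + 1 / J ^ 2) := by positivity
  nlinarith [mul_nonneg (mul_nonneg hK0 (add_nonneg hI00 hI10)) hfac, hfac]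
end
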